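/- arXiv:2204.04938 — 5 statements merged into one kernel-verified Lean document; each statement's English description precedes it below -/
import Mathlib

section
/- If an argument a has a value v_a that is maximal in the preorder among the values of all arguments (v_b ≼ v_a for every argument b), then a is only defeated by arguments whose values are equivalent to v_a, and every such defeat is mutual; hence the set of arguments defeating a is defended against by a itself, i.e., {a} ∪ (its defenders) shows a is acceptable with respect to a set containing a. -/
/-- Arguments: ordinary arguments ⟨+v, λ⟩ and blocking arguments ⟨-v, ¬λ⟩. -/
inductive Arg (V P : Type) where
  | ordinary (v : V) (lam : P)
  | blocking (v : V) (lam : P)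

namespace Arg
def val {V P : Type} : Arg V P → V
  | ordinary v _ => v
  | blocking v _ => v
def plan {V P : Type} : Arg V P → P
  | ordinary _ l => l
  | blocking _ l => l
end Arg

/-- Attack relation: ordinary-ordinary iff plans differ; ordinary-blocking (both
directions) iff plans equal; blocking arguments never attack each other. -/
def attacks {V P : Type} : Arg V P → Arg V P → Prop
  | .ordinary _ l1, .ordinary _ l2 => l1 ≠ l2
  | .ordinary _ l1, .blocking _ l2 => l1 = l2
  | .blocking _ l1, .ordinary _ l2 => l1 = l2
  | .blocking _ _, .blocking _ _ => False

/-- Strict part of the preorder `le`. -/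
def vlt {V : Type} (le : V → V → Prop) (a b : V) : Prop := le a b ∧ ¬ le b a

/-- Defeat: a defeats b iff a attacks b and ¬(vₐ ≺ v_b). -/
def defeats {V P : Type} (le : V → V → Prop) (a b : Arg V P) : Prop :=
  attacks a b ∧ ¬ vlt le a.val b.val

/-- If a's value is maximal among the values of all arguments, then a is
acceptable with respect to {a}: every defeater of a is defeated by a itself. -/
theorem max_value_acceptable_wrt_self {V P : Type} (le : V → V → Prop)
    (hrefl : ∀ v, le v v) (htrans : ∀ a b c, le a b → le b c → le a c)
    (htotal : ∀ a b, le a b ∨ le b a)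
    (A : Set (Arg V P)) (a : Arg V P) (ha : a ∈ A)
    (hmax : ∀ b ∈ A, le b.val a.val) :
    ∀ b ∈ A, defeats le b a → ∃ c ∈ ({a} : Set (Arg V P)), defeats le c b := by
  intro b hb hdef
  refine ⟨a, rfl, ?_, ?_⟩
  · cases a <;> cases b <;> simp_all [attacks, defeats] <;> tauto
  · intro ⟨_, hna⟩; exact hna (hmax b hb)
end

section
/- If an argument a is maximal in value (v_b ≼ v_a for all arguments b) and a is not involved in any defeat cycle (in particular, no argument both defeats and is defeated by a), then a receives no defeats at all, and hence a belongs to the grounded extension. -/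
/-- Characteristic function of the framework (A, defeats le) restricted to A. -/
def charF {V P : Type} (le : V → V → Prop) (A : Set (Arg V P)) (E : Set (Arg V P)) :
    Set (Arg V P) :=
  {x | x ∈ A ∧ ∀ b ∈ A, defeats le b x → ∃ c ∈ E, defeats le c b}

/-- The grounded extension: least fixed point of the characteristic function
(Knaster–Tarski form). -/
def grounded {V P : Type} (le : V → V → Prop) (A : Set (Arg V P)) : Set (Arg V P) :=
  sInf {E | charF le A E ⊆ E}

/-- A maximal-value argument that is in no defeat cycle (in particular, in no
mutual defeat) receives no defeats, and hence belongs to the grounded extension. -/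
theorem max_value_no_cycle_undefeated_in_grounded {V P : Type} (le : V → V → Prop)
    (hrefl : ∀ v, le v v) (htrans : ∀ a b c, le a b → le b c → le a c)
    (htotal : ∀ a b, le a b ∨ le b a)
    (A : Set (Arg V P)) (a : Arg V P) (ha : a ∈ A)
    (hmax : ∀ b ∈ A, le b.val a.val)
    (hnocycle : ¬ ∃ b ∈ A, defeats le b a ∧ defeats le a b) :
    (∀ b ∈ A, ¬ defeats le b a) ∧ a ∈ grounded le A := by
  have hsym : ∀ x y : Arg V P, attacks x y → attacks y x := by
    intro x y h
    cases x <;> cases y <;> simp [attacks] at * <;> first | exact h.symm | exact fun e => h e.symm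
  have hnd : ∀ b ∈ A, ¬ defeats le b a := by
    intro b hb hdef
    apply hnocycle
    refine ⟨b, hb, hdef, hsym b a hdef.1, ?_⟩
    intro ⟨_, hnab⟩
    exact hnab (hmax b hb)
  refine ⟨hnd, ?_⟩
  intro E hE
  apply hE
  exact ⟨ha, fun b hb hdef => absurd hdef (hnd b hb)⟩
end

section
/- In a finite argumentation framework whose defeat relation has no odd cycles, every preferred extension is a stable extension. -/
section AF
variable {A : Type}

def conflictFree (D : A → A → Prop) (E : Set A) : Prop :=
  ∀ a ∈ E, ∀ b ∈ E, ¬ D a b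

def acceptable (D : A → A → Prop) (E : Set A) (a : A) : Prop :=
  ∀ b, D b a → ∃ c ∈ E, D c b

def admissible (D : A → A → Prop) (E : Set A) : Prop :=
  conflictFree D E ∧ ∀ a ∈ E, acceptable D E a

def complete (D : A → A → Prop) (E : Set A) : Prop :=
  admissible D E ∧ ∀ a, acceptable D E a → a ∈ E

def preferred (D : A → A → Prop) (E : Set A) : Prop :=
  complete D E ∧ ∀ E', complete D E' → E ⊆ E' → E = E'

def stable (D : A → A → Prop) (E : Set A) : Prop :=
  conflictFree D E ∧ ∀ b, b ∉ E → ∃ a ∈ E, D a b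

/-- Characteristic function of an abstract argumentation framework. -/
def charFA (D : A → A → Prop) (E : Set A) : Set A :=
  {a | ∀ b, D b a → ∃ c ∈ E, D c b}

/-- Grounded extension: least fixed point of the characteristic function. -/
def groundedA (D : A → A → Prop) : Set A :=
  sInf {E | charFA D E ⊆ E}

end AF

section Kernel

variable {A : Type} {D : A → A → Prop}

/-- A walk of length `n` from `a` to `b` along `D`. -/
def Wlk (D : A → A → Prop) (n : ℕ) (a b : A) : Prop :=
  ∃ f : ℕ → A, f 0 = a ∧ f n = b ∧ ∀ i < n, D (f i) (f (i + 1))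

lemma wlk_refl (a : A) : Wlk D 0 a a := ⟨fun _ => a, rfl, rfl, by omega⟩

lemma wlk_single {a b : A} (h : D a b) : Wlk D 1 a b := by
  refine ⟨fun i => if i = 0 then a else b, by simp, by simp, ?_⟩
  intro i hi
  have : i = 0 := by omega
  subst this
  simpa using h

lemma wlk_trans {m n : ℕ} {a b c : A} (h1 : Wlk D m a b) (h2 : Wlk D n b c) :
    Wlk D (m + n) a c := by
  obtain ⟨f, hf0, hfm, hf⟩ := h1
  obtain ⟨g, hg0, hgn, hg⟩ := h2
  refine ⟨fun i => if i ≤ m then f i else g (i - m), by simp [hf0], ?_, ?_⟩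
  · by_cases h : n = 0
    · subst h
      simp only [Nat.add_zero, le_refl, if_pos]
      rw [hfm, ← hg0]
      exact hgn
    · have h1 : ¬ (m + n ≤ m) := by omega
      simp only [h1, if_false]
      have h2 : m + n - m = n := by omega
      rw [h2, hgn]
  · intro i hi
    rcases lt_trichotomy i m with h | h | h
    · have e1 : i ≤ m := by omega
      have e2 : i + 1 ≤ m := by omega
      simp only [e1, e2, if_true]
      exact hf i h
    · subst h
      have hn : 0 < n := by omega
      have e1 : i ≤ i := le_refl i
      have e2 : ¬ (i + 1 ≤ i) := by omega
      simp only [e1, e2, if_true, if_false]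
      have e3 : i + 1 - i = 1 := by omega
      rw [e3, hfm, ← hg0]
      exact hg 0 hn
    · have e1 : ¬ (i ≤ m) := by omega
      have e2 : ¬ (i + 1 ≤ m) := by omega
      simp only [e1, e2, if_false]
      have e3 : i + 1 - m = (i - m) + 1 := by omega
      rw [e3]
      exact hg (i - m) (by omega)

lemma no_odd_closed
    (hnodd : ¬ ∃ (n : ℕ) (f : ℕ → A), Odd n ∧ f n = f 0 ∧ ∀ i < n, D (f i) (f (i + 1)))
    {n : ℕ} {a : A} (hodd : Odd n) (h : Wlk D n a a) : False := by
  obtain ⟨f, hf0, hfn, hf⟩ := h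
  exact hnodd ⟨n, f, hodd, by rw [hf0, hfn], hf⟩

lemma walk_parity
    (hnodd : ¬ ∃ (n : ℕ) (f : ℕ → A), Odd n ∧ f n = f 0 ∧ ∀ i < n, D (f i) (f (i + 1)))
    {m n k : ℕ} {v w : A}
    (h1 : Wlk D m v w) (h2 : Wlk D n v w) (h3 : Wlk D k w v) :
    (Even m ↔ Even n) := by
  have c1 : ¬ Odd (m + k) := fun h => no_odd_closed hnodd h (wlk_trans h1 h3)
  have c2 : ¬ Odd (n + k) := fun h => no_odd_closed hnodd h (wlk_trans h2 h3)
  rw [Nat.odd_iff] at c1 c2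
  rw [Nat.even_iff, Nat.even_iff]
  omega

lemma rtg_wlk {r : A → A → Prop} (hr : ∀ x y, r x y → D x y) {a b : A}
    (h : Relation.ReflTransGen r a b) : ∃ n, Wlk D n a b := by
  induction h with
  | refl => exact ⟨0, wlk_refl _⟩
  | tail _ h2 ih =>
    obtain ⟨n, hn⟩ := ih
    exact ⟨n + 1, wlk_trans hn (wlk_single (hr _ _ h2))⟩

/-- Richardson's theorem: a finite digraph with no odd closed walk has a kernel
on every vertex set. -/
lemma kernel_exists {A : Type} [Fintype A] {D : A → A → Prop}
    (hnodd : ¬ ∃ (n : ℕ) (f : ℕ → A), Odd n ∧ f n = f 0 ∧ ∀ i < n, D (f i) (f (i + 1)))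
    (V : Set A) :
    ∃ S : Set A, S ⊆ V ∧ (∀ a ∈ S, ∀ b ∈ S, ¬ D a b) ∧
      ∀ b ∈ V, b ∉ S → ∃ a ∈ S, D a b := by
  suffices h : ∀ (N : ℕ) (V : Set A), V.ncard ≤ N →
      ∃ S : Set A, S ⊆ V ∧ (∀ a ∈ S, ∀ b ∈ S, ¬ D a b) ∧
        ∀ b ∈ V, b ∉ S → ∃ a ∈ S, D a b from h V.ncard V le_rfl
  intro N
  induction N with
  | zero =>
    intro V hV
    have h0 : V = ∅ := by
      rw [← Set.ncard_eq_zero (Set.toFinite _)]; omega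
    exact ⟨∅, by simp, by simp, by simp [h0]⟩
  | succ N ih =>
    intro V hV
    rcases V.eq_empty_or_nonempty with rfl | ⟨v0, hv0⟩
    · exact ⟨∅, by simp, by simp, by simp⟩
    set R := Relation.ReflTransGen (fun x y : A => x ∈ V ∧ y ∈ V ∧ D x y) with hRdef
    set s := fun x y : A => R x y ∧ ¬ R y x with hsdef
    have htrans : IsTrans A s :=
      ⟨fun x y z hxy hyz => ⟨hxy.1.trans hyz.1, fun h => hxy.2 (hyz.1.trans h)⟩⟩
    have hirr : IsIrrefl A s := ⟨fun x hx => hx.2 Relation.ReflTransGen.refl⟩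
    obtain ⟨v, hvV, hvmin⟩ := (Finite.wellFounded_of_trans_of_irrefl s).has_min V ⟨v0, hv0⟩
    have hmin : ∀ w, R w v → R v w := by
      intro w hw
      rcases Relation.ReflTransGen.cases_head hw with rfl | ⟨c, hwc, _⟩
      · exact Relation.ReflTransGen.refl
      · by_contra hnw
        exact hvmin w hwc.1 ⟨hw, hnw⟩
    set C := {w : A | R v w ∧ R w v} with hCdef
    have hCV : C ⊆ V := by
      intro w hw
      rcases Relation.ReflTransGen.cases_tail hw.1 with rfl | ⟨c, _, hedge⟩
      · exact hvV
      · exact hedge.2.1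
    have hRwlk : ∀ {x y : A}, R x y → ∃ n, Wlk D n x y :=
      fun h => rtg_wlk (fun _ _ hp => hp.2.2) h
    set S0 := {w : A | w ∈ C ∧ ∃ m, Even m ∧ Wlk D m v w} with hS0def
    have hvC : v ∈ C := ⟨Relation.ReflTransGen.refl, Relation.ReflTransGen.refl⟩
    have hvS0 : v ∈ S0 := ⟨hvC, 0, Even.zero, wlk_refl v⟩
    have hS0indep : ∀ a ∈ S0, ∀ b ∈ S0, ¬ D a b := by
      intro a ha b hb hab
      obtain ⟨m, hm, hwm⟩ := ha.2
      obtain ⟨n, hn, hwn⟩ := hb.2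
      obtain ⟨k, hwk⟩ := hRwlk hb.1.2
      have hpar := walk_parity hnodd (wlk_trans hwm (wlk_single hab)) hwn hwk
      rw [Nat.even_add_one] at hpar
      exact (hpar.mpr hn) hm
    have hS0dom : ∀ b ∈ C, b ∉ S0 → ∃ a ∈ S0, D a b := by
      intro b hb hbS
      rcases Relation.ReflTransGen.cases_tail hb.1 with rfl | ⟨a, hva, hedge⟩
      · exact absurd hvS0 hbS
      · have haC : a ∈ C :=
          ⟨hva, Relation.ReflTransGen.trans (Relation.ReflTransGen.single hedge) hb.2⟩
        obtain ⟨m, hwm⟩ := hRwlk hva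
        by_cases hm : Even m
        · exact ⟨a, ⟨haC, m, hm, hwm⟩, hedge.2.2⟩
        · exact absurd ⟨hb, m + 1, Nat.even_add_one.mpr hm,
            wlk_trans hwm (wlk_single hedge.2.2)⟩ hbS
    set V' := V \ (C ∪ {b | ∃ a ∈ S0, D a b}) with hV'def
    have hss : V' ⊂ V :=
      (Set.ssubset_iff_of_subset Set.diff_subset).mpr
        ⟨v, hvV, fun h => h.2 (Or.inl hvC)⟩
    have hlt : V'.ncard ≤ N := by
      have := Set.ncard_lt_ncard hss (Set.toFinite _)
      omega
    obtain ⟨S', hS'V, hS'indep, hS'dom⟩ := ih V' hlt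
    refine ⟨S0 ∪ S', ?_, ?_, ?_⟩
    · exact Set.union_subset (fun w hw => hCV hw.1) (hS'V.trans Set.diff_subset)
    · rintro a (ha | ha) b (hb | hb) hab
      · exact hS0indep a ha b hb hab
      · exact (hS'V hb).2 (Or.inr ⟨a, ha, hab⟩)
      · have haV : a ∈ V := (Set.diff_subset (hS'V ha))
        have hbC : b ∈ C := hb.1
        have hRav : R a v :=
          Relation.ReflTransGen.trans
            (Relation.ReflTransGen.single ⟨haV, hCV hbC, hab⟩) hbC.2
        exact (hS'V ha).2 (Or.inl ⟨hmin a hRav, hRav⟩)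
      · exact hS'indep a ha b hb hab
    · intro b hbV hbS
      by_cases hbC : b ∈ C
      · obtain ⟨a, haS0, hab⟩ := hS0dom b hbC (fun h => hbS (Or.inl h))
        exact ⟨a, Or.inl haS0, hab⟩
      · by_cases hbA : ∃ a ∈ S0, D a b
        · obtain ⟨a, ha, hab⟩ := hbA
          exact ⟨a, Or.inl ha, hab⟩
        · have hbV' : b ∈ V' := ⟨hbV, fun h => h.elim hbC hbA⟩
          obtain ⟨a, ha, hab⟩ := hS'dom b hbV' (fun h => hbS (Or.inr h))
          exact ⟨a, Or.inr ha, hab⟩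

end Kernel

section AFLemmas

variable {A : Type}

lemma fundamental {D : A → A → Prop} {F : Set A} (hF : admissible D F)
    {a : A} (ha : acceptable D F a) : admissible D (insert a F) := by
  obtain ⟨hcf, hacc⟩ := hF
  have hnoFa : ∀ x ∈ F, ¬ D x a := by
    intro x hx hxa
    obtain ⟨c, hc, hcx⟩ := ha x hxa
    exact hcf c hc x hx hcx
  have hnoaF : ∀ y ∈ F, ¬ D a y := by
    intro y hy hay
    obtain ⟨c, hc, hca⟩ := hacc y hy a hay
    exact hnoFa c hc hca
  constructor
  · rintro x (rfl | hx) y (rfl | hy) hxy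
    · obtain ⟨c, hc, hca⟩ := ha _ hxy
      exact hnoFa c hc hca
    · exact hnoaF y hy hxy
    · exact hnoFa x hx hxy
    · exact hcf x hx y hy hxy
  · rintro x (rfl | hx)
    · intro b hb
      obtain ⟨c, hc, hcb⟩ := ha b hb
      exact ⟨c, Or.inr hc, hcb⟩
    · intro b hb
      obtain ⟨c, hc, hcb⟩ := hacc x hx b hb
      exact ⟨c, Or.inr hc, hcb⟩

lemma exists_complete_superset [Fintype A] {D : A → A → Prop} :
    ∀ F : Set A, admissible D F → ∃ G, complete D G ∧ F ⊆ G := by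
  suffices h : ∀ (n : ℕ) (F : Set A), (Set.univ \ F).ncard ≤ n → admissible D F →
      ∃ G, complete D G ∧ F ⊆ G from fun F hF => h _ F le_rfl hF
  intro n
  induction n with
  | zero =>
    intro F hc hF
    have h0 : Set.univ \ F = ∅ := by
      rw [← Set.ncard_eq_zero (Set.toFinite _)]; omega
    refine ⟨F, ⟨hF, fun a _ => ?_⟩, le_rfl⟩
    by_contra haF
    exact absurd h0 (Set.nonempty_iff_ne_empty.mp ⟨a, trivial, haF⟩)
  | succ n ih =>
    intro F hc hF
    by_cases h : ∃ a, a ∉ F ∧ acceptable D F a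
    · obtain ⟨a, haF, ha⟩ := h
      have hlt : (Set.univ \ insert a F).ncard ≤ n := by
        have hss : (Set.univ \ insert a F) ⊂ (Set.univ \ F) :=
          (Set.ssubset_iff_of_subset
              (Set.diff_subset_diff_right (Set.subset_insert a F))).mpr
            ⟨a, ⟨trivial, haF⟩, fun h => h.2 (Or.inl rfl)⟩
        have := Set.ncard_lt_ncard hss (Set.toFinite _)
        omega
      obtain ⟨G, hG, hsub⟩ := ih (insert a F) hlt (fundamental hF ha)
      exact ⟨G, hG, (Set.subset_insert a F).trans hsub⟩
    · push_neg at h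
      refine ⟨F, ⟨hF, fun a ha => ?_⟩, le_rfl⟩
      by_contra han
      exact h a han ha

end AFLemmas


/-- In a finite argumentation framework whose defeat relation has no odd cycles,
every preferred extension is a stable extension. -/
theorem preferred_is_stable_of_no_odd_cycle {A : Type} [Fintype A]
    (D : A → A → Prop)
    (hnodd : ¬ ∃ (n : ℕ) (f : ℕ → A), Odd n ∧ f n = f 0 ∧
      ∀ i < n, D (f i) (f (i + 1))) :
    ∀ E : Set A, preferred D E → stable D E := by
  intro E hpref
  obtain ⟨⟨hEadm, hEcomp⟩, hEmax⟩ := hpref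
  refine ⟨hEadm.1, ?_⟩
  by_contra hcon
  push_neg at hcon
  obtain ⟨b0, hb0E, hb0⟩ := hcon
  set U := {a : A | a ∉ E ∧ ¬ ∃ c ∈ E, D c a} with hUdef
  have hb0U : b0 ∈ U := ⟨hb0E, fun ⟨c, hc, hcb⟩ => hb0 c hc hcb⟩
  obtain ⟨S, hSU, hSind, hSdom⟩ := kernel_exists hnodd U
  have hSne : ∃ s, s ∈ S := by
    by_cases h : b0 ∈ S
    · exact ⟨b0, h⟩
    · obtain ⟨a, ha, _⟩ := hSdom b0 hb0U h
      exact ⟨a, ha⟩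
  have hadm : admissible D (E ∪ S) := by
    constructor
    · rintro a (ha | ha) b (hb | hb) hab
      · exact hEadm.1 a ha b hb hab
      · exact (hSU hb).2 ⟨a, ha, hab⟩
      · obtain ⟨c, hc, hca⟩ := hEadm.2 b hb a hab
        exact (hSU ha).2 ⟨c, hc, hca⟩
      · exact hSind a ha b hb hab
    · rintro x (hx | hx)
      · intro b hb
        obtain ⟨c, hc, hcb⟩ := hEadm.2 x hx b hb
        exact ⟨c, Or.inl hc, hcb⟩
      · intro b hb
        by_cases hbE : ∃ c ∈ E, D c b
        · obtain ⟨c, hc, hcb⟩ := hbE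
          exact ⟨c, Or.inl hc, hcb⟩
        · have hbU : b ∈ U := ⟨fun hbEm => (hSU hx).2 ⟨b, hbEm, hb⟩, hbE⟩
          by_cases hbS : b ∈ S
          · exact absurd hb (hSind b hbS x hx)
          · obtain ⟨a, ha, hab⟩ := hSdom b hbU hbS
            exact ⟨a, Or.inr ha, hab⟩
  obtain ⟨G, hG, hsub⟩ := exists_complete_superset _ hadm
  have hEG : E ⊆ G := (Set.subset_union_left).trans hsub
  have hEeq : E = G := hEmax G hG hEG
  obtain ⟨s, hs⟩ := hSne
  have hsG : s ∈ G := hsub (Or.inr hs)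
  exact (hSU hs).1 (hEeq ▸ hsG)
end

section
/- If every ordinary argument is defeated by some blocking argument with strictly greater value (v_ordinary ≺ v_blocking), then no admissible set contains an ordinary argument; in particular the set of optimal plans is empty. -/
/-- Admissibility of E relative to the framework on the set of arguments A. -/
def admissibleIn {V P : Type} (le : V → V → Prop) (A E : Set (Arg V P)) : Prop :=
  E ⊆ A ∧ (∀ a ∈ E, ∀ b ∈ E, ¬ defeats le a b) ∧
    ∀ a ∈ E, ∀ b ∈ A, defeats le b a → ∃ c ∈ E, defeats le c b

/-- If every ordinary argument is defeated by some blocking argument with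
strictly greater value, then no admissible set contains an ordinary argument;
in particular the set of optimal plans is empty. -/
theorem no_ordinary_in_admissible {V P : Type} [Fintype V] [Fintype P]
    (le : V → V → Prop)
    (hrefl : ∀ v, le v v) (htrans : ∀ a b c, le a b → le b c → le a c)
    (htotal : ∀ a b, le a b ∨ le b a)
    (A : Set (Arg V P))
    (H : ∀ (v : V) (l : P), Arg.ordinary v l ∈ A →
      ∃ w : V, Arg.blocking w l ∈ A ∧
        defeats le (Arg.blocking w l) (Arg.ordinary v l) ∧ vlt le v w) :
    (∀ E : Set (Arg V P), admissibleIn le A E →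
      ∀ (v : V) (l : P), Arg.ordinary v l ∉ E) ∧
    {l : P | ∃ (v : V) (E : Set (Arg V P)),
      admissibleIn le A E ∧ Arg.ordinary v l ∈ E} = ∅ := by
  classical
  have exmax : ∀ s : Finset V, s.Nonempty → ∃ m ∈ s, ∀ x ∈ s, le x m := by
    intro s
    induction s using Finset.induction with
    | empty => intro h; simp at h
    | @insert a s ha ih =>
      intro _
      rcases s.eq_empty_or_nonempty with h | h
      · subst h
        exact ⟨a, by simp, by intro x hx; simp at hx; subst hx; exact hrefl x⟩
      · obtain ⟨m, hm, hmax⟩ := ih h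
        rcases htotal a m with hle | hle
        · refine ⟨m, Finset.mem_insert_of_mem hm, ?_⟩
          intro x hx
          rcases Finset.mem_insert.mp hx with rfl | hx
          · exact hle
          · exact hmax x hx
        · refine ⟨a, Finset.mem_insert_self a s, ?_⟩
          intro x hx
          rcases Finset.mem_insert.mp hx with rfl | hx
          · exact hrefl x
          · exact htrans x m a (hmax x hx) hle
  have main : ∀ E : Set (Arg V P), admissibleIn le A E →
      ∀ (v : V) (l : P), Arg.ordinary v l ∉ E := by
    intro E hE v l hv
    obtain ⟨hEA, hcf, hdef⟩ := hE
    -- values of ordinary arguments in E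
    set s : Finset V := Finset.univ.filter (fun u => ∃ l', Arg.ordinary u l' ∈ E) with hs
    have hsne : s.Nonempty := ⟨v, by simp [hs]; exact ⟨l, hv⟩⟩
    obtain ⟨m, hm, hmax⟩ := exmax s hsne
    have hm' : ∃ l', Arg.ordinary m l' ∈ E := by
      have := Finset.mem_filter.mp hm; exact this.2
    obtain ⟨l', hml⟩ := hm'
    obtain ⟨w, hwA, hwdef, hwlt⟩ := H m l' (hEA hml)
    obtain ⟨c, hcE, hcdef⟩ := hdef _ hml _ hwA hwdef
    -- c attacks blocking w l', so c is ordinary with plan l'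
    obtain ⟨hatt, hnlt⟩ := hcdef
    cases c with
    | blocking u l2 => exact hatt.elim
    | ordinary u l2 =>
      have hul : l2 = l' := hatt
      have hus : u ∈ s := by
        simp only [hs, Finset.mem_filter, Finset.mem_univ, true_and]
        exact ⟨l2, hcE⟩
      have huw : le w u := by
        rcases htotal u w with h1 | h1
        · by_contra h2
          exact hnlt ⟨h1, h2⟩
        · exact h1
      have : le w m := htrans w u m huw (hmax u hus)
      exact hwlt.2 this
  refine ⟨main, ?_⟩
  ext l
  simp only [Set.mem_setOf_eq, Set.mem_empty_iff_false, iff_false]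
  rintro ⟨v, E, hE, hv⟩
  exact main E hE v l hv
end

section
/- In a finite argumentation framework, if the defeat relation is symmetric (every defeat is mutual), then every preferred extension is stable. -/
section AF
variable {A : Type}

/-!
Under a symmetric defeat relation every conflict-free set defends itself, so admissibility is
just conflict-freeness. If a preferred extension `E` neither contained nor defeated some `b`,
then, `b` not defeating itself, `insert b E` would be conflict-free and hence admissible. By
Zorn's lemma and Dung's fundamental lemma it lies in a complete extension, contradicting the
maximality of `E`.
-/

section AF

variable {A : Type} {D : A → A → Prop} {S T : Set A} {a : A}

open Set

theorem acceptable.mono (hST : S ⊆ T) (ha : acceptable D S a) : acceptable D T a :=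
  fun b hb ↦ (ha b hb).imp fun _ ⟨hc, hcb⟩ ↦ ⟨hST hc, hcb⟩

theorem not_defeats_of_acceptable (hS : conflictFree D S) (ha : acceptable D S a) {c : A}
    (hc : c ∈ S) : ¬ D c a := fun hca ↦
  let ⟨d, hd, hdc⟩ := ha c hca
  hS d hd c hc hdc

/-- Dung's fundamental lemma. -/
theorem admissible_insert_of_acceptable (hS : admissible D S) (ha : acceptable D S a) :
    admissible D (insert a S) := by
  obtain ⟨hcf, hdef⟩ := hS
  have hSa : ∀ c ∈ S, ¬ D c a := fun c hc ↦ not_defeats_of_acceptable hcf ha hc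
  refine ⟨?_, ?_⟩
  · rintro x (rfl | hx) y (rfl | hy) hxy
    · obtain ⟨c, hc, hca⟩ := ha _ hxy
      exact hSa c hc hca
    · obtain ⟨c, hc, hca⟩ := hdef y hy _ hxy
      exact hSa c hc hca
    · exact hSa x hx hxy
    · exact hcf x hx y hy hxy
  · rintro z (rfl | hz)
    · exact ha.mono (subset_insert _ _)
    · exact (hdef z hz).mono (subset_insert _ _)

theorem complete_of_maximal_admissible (hS : Maximal (admissible D) S) : complete D S :=
  ⟨hS.prop, fun _ ha ↦ hS.mem_of_prop_insert (admissible_insert_of_acceptable hS.prop ha)⟩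

theorem admissible_sUnion_of_isChain {c : Set (Set A)} (hc : ∀ S ∈ c, admissible D S)
    (hchain : IsChain (· ⊆ ·) c) : admissible D (⋃₀ c) := by
  refine ⟨?_, ?_⟩
  · rintro x ⟨S, hS, hx⟩ y ⟨S', hS', hy⟩
    obtain ⟨U, hU, hSU, hS'U⟩ := hchain.directedOn S hS S' hS'
    exact (hc U hU).1 x (hSU hx) y (hS'U hy)
  · rintro x ⟨S, hS, hx⟩
    exact ((hc S hS).2 x hx).mono (subset_sUnion_of_mem hS)

theorem exists_complete_superset_of_admissible (hS : admissible D S) :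
    ∃ T, S ⊆ T ∧ complete D T := by
  obtain ⟨T, hST, hT⟩ := zorn_subset_nonempty {T | admissible D T}
    (fun c hc hchain _ ↦ ⟨⋃₀ c, admissible_sUnion_of_isChain hc hchain,
      fun _ ↦ subset_sUnion_of_mem⟩) S hS
  exact ⟨T, hST, complete_of_maximal_admissible hT⟩

theorem preferred.subset_of_admissible {E : Set A} (hE : preferred D E) (hS : admissible D S)
    (hES : E ⊆ S) : S ⊆ E := by
  obtain ⟨T, hST, hT⟩ := exists_complete_superset_of_admissible hS
  rw [hE.2 T hT (hES.trans hST)]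
  exact hST

theorem admissible_of_conflictFree_of_symmetric (hsymm : ∀ a b, D a b → D b a)
    (hS : conflictFree D S) : admissible D S :=
  ⟨hS, fun a ha b hba ↦ ⟨a, ha, hsymm b a hba⟩⟩

theorem conflictFree_insert_of_symmetric (hsymm : ∀ a b, D a b → D b a) (hirr : ∀ a, ¬ D a a)
    (hS : conflictFree D S) (ha : ∀ c ∈ S, ¬ D c a) : conflictFree D (insert a S) := by
  rintro x (rfl | hx) y (rfl | hy) hxy
  · exact hirr _ hxy
  · exact ha y hy (hsymm _ y hxy)
  · exact ha x hx hxy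
  · exact hS x hx y hy hxy

end AF

theorem preferred_is_stable_of_symmetric_general {A : Type}
    (D : A → A → Prop) (hsymm : ∀ a b, D a b → D b a) (hirr : ∀ a, ¬ D a a) :
    ∀ E : Set A, preferred D E → stable D E := by
  intro E hE
  have hcf : conflictFree D E := hE.1.1.1
  refine ⟨hcf, fun b hbE ↦ ?_⟩
  by_contra! hb
  have hadm : admissible D (insert b E) :=
    admissible_of_conflictFree_of_symmetric hsymm
      (conflictFree_insert_of_symmetric hsymm hirr hcf hb)
  exact hbE (hE.subset_of_admissible hadm (Set.subset_insert b E) (Set.mem_insert b E))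

/-- In a finite argumentation framework with a symmetric and irreflexive defeat
relation, every preferred extension is stable. -/
theorem preferred_is_stable_of_symmetric {A : Type} [Fintype A]
    (D : A → A → Prop) (hsymm : ∀ a b, D a b → D b a) (hirr : ∀ a, ¬ D a a) :
    ∀ E : Set A, preferred D E → stable D E :=
  preferred_is_stable_of_symmetric_general D hsymm hirr
end AF
end
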